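/- Let G = (V, W) be a bipartite graph such that the transversal system M_T(G) has a maximal element, witnessed by a matching m_0. Then M_T(G) equals M_T(G - (W \ V(m_0))), i.e., deleting the vertices of W not covered by m_0 does not change the matchable subsets of V. -/
import Mathlib


open Set

section Bipartite

variable {V W : Type*}

/-- `m` is a matching in the bipartite graph with edge set `E ⊆ V × W`. -/
def IsBipMatching (E m : Set (V × W)) : Prop :=
  m ⊆ E ∧ ∀ p ∈ m, ∀ q ∈ m, (p.1 = q.1 ∨ p.2 = q.2) → p = q

/-- `I ⊆ V` is matchable in the bipartite graph with edge set `E`. -/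
def Matchable (E : Set (V × W)) (I : Set V) : Prop :=
  ∃ m, IsBipMatching E m ∧ Prod.fst '' m = I

/-- One step along an edge of `F` in the bipartite graph, on vertex type `V ⊕ W`. -/
def bipStep (F : Set (V × W)) : (V ⊕ W) → (V ⊕ W) → Prop := fun a b =>
  match a, b with
  | Sum.inl v, Sum.inr w => (v, w) ∈ F
  | Sum.inr w, Sum.inl v => (v, w) ∈ F
  | _, _ => False

/-- Every connected component of the bipartite graph with edge set `F` is finite. -/
def FiniteComponents (F : Set (V × W)) : Prop :=
  ∀ x : V ⊕ W, {y | Relation.ReflTransGen (bipStep F) x y}.Finite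

/-- `m` is an `m0`-matching: a matching such that every component of `m0 ∪ m` is finite. -/
def IsM0Matching (E m0 m : Set (V × W)) : Prop :=
  IsBipMatching E m ∧ FiniteComponents (m0 ∪ m)

/-- `I` is `m0`-matchable. -/
def M0Matchable (E m0 : Set (V × W)) (I : Set V) : Prop :=
  ∃ m, IsM0Matching E m0 m ∧ Prod.fst '' m = I

/-- `I` is `m0`-matchable onto `W'`. -/
def M0MatchableOnto (E m0 : Set (V × W)) (I : Set V) (W' : Set W) : Prop :=
  ∃ m, IsM0Matching E m0 m ∧ Prod.fst '' m = I ∧ Prod.snd '' m = W'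

end Bipartite

section Star

variable {V : Type*}

/-- The edge set of the converted bimaze of the dimaze `(D, B0)`: the right class is
`{v ∣ v ∉ B0}` (representing `(V \ B0)⋆`) and the edges are the identity matching
together with `v u⋆` for every edge `(u, v)` of `D`. -/
def starEdges (D : V → V → Prop) (B0 : Set V) : Set (V × V) :=
  {p | (p.1 = p.2 ∧ p.2 ∉ B0) ∨ (D p.2 p.1 ∧ p.2 ∉ B0)}

/-- The identity matching of the converted bimaze. -/
def starM0 (B0 : Set V) : Set (V × V) := {p | p.1 = p.2 ∧ p.1 ∉ B0}

end Star

section AuxDeleteUncovered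

variable {V W : Type*}

lemma bipStep_symm_aux {F : Set (V × W)} {x y : V ⊕ W} (h : bipStep F x y) : bipStep F y x := by
  cases x <;> cases y <;> simp_all [bipStep]

/-- Auxiliary: there is a matching of `B` inside `m0 ∪ m` avoiding `w`. -/
def CwAux (E m0 m : Set (V × W)) (B : Set V) (w : W) : Prop :=
  ∃ m0', IsBipMatching E m0' ∧ m0' ⊆ m0 ∪ m ∧ Prod.fst '' m0' = B ∧ w ∉ Prod.snd '' m0'

lemma flip_lemma_aux {E m0 m : Set (V × W)} {B : Set V} (hE : m0 ∪ m ⊆ E) {m0' : Set (V × W)}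
    (hM : IsBipMatching E m0') (hsub : m0' ⊆ m0 ∪ m) (hfst : Prod.fst '' m0' = B)
    {v : V} {w w' : W} (hw : w ∉ Prod.snd '' m0') (he' : (v, w') ∈ m0')
    (he : (v, w) ∈ m0 ∪ m) : CwAux E m0 m B w' := by
  have hww : w' ≠ w := by rintro rfl; exact hw ⟨(v, w'), he', rfl⟩
  have hkey : ∀ r ∈ m0' \ {(v, w')}, r.1 = v ∨ r.2 = w → False := by
    rintro r ⟨hr, hr'⟩ h
    rcases h with h | h
    · exact hr' (by simpa using hM.2 r hr (v, w') he' (Or.inl h))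
    · exact hw ⟨r, hr, h⟩
  refine ⟨insert (v, w) (m0' \ {(v, w')}), ⟨?_, ?_⟩, ?_, ?_, ?_⟩
  · rintro p (rfl | hp)
    · exact hE he
    · exact hM.1 hp.1
  · rintro p (rfl | hp) q (rfl | hq) hpq
    · rfl
    · exact absurd (hpq.imp Eq.symm Eq.symm) (fun h => hkey q hq h)
    · exact absurd hpq (fun h => hkey p hp h)
    · exact hM.2 p hp.1 q hq.1 hpq
  · rintro p (rfl | hp)
    · exact he
    · exact hsub hp.1
  · apply Set.Subset.antisymm
    · rintro _ ⟨p, hp, rfl⟩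
      rcases hp with rfl | hp
      · exact hfst ▸ ⟨(v, w'), he', rfl⟩
      · exact hfst ▸ ⟨p, hp.1, rfl⟩
    · intro u hu
      rw [← hfst] at hu
      obtain ⟨p, hp, rfl⟩ := hu
      by_cases hpe : p = (v, w')
      · exact ⟨(v, w), Or.inl rfl, by simp [hpe]⟩
      · exact ⟨p, Or.inr ⟨hp, hpe⟩, rfl⟩
  · rintro ⟨p, hp, hp2⟩
    rcases hp with rfl | hp
    · exact hww hp2.symm
    · have := hM.2 p hp.1 (v, w') he' (Or.inr hp2)
      exact hp.2 (by simp [this])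

lemma key_lemma_aux {E m0 m : Set (V × W)} {B : Set V}
    (hm0 : IsBipMatching E m0) (hB : Prod.fst '' m0 = B) (hm : IsBipMatching E m)
    (hmax : ∀ I, Matchable E I → B ⊆ I → I = B) {w0 : W} (hw0 : w0 ∉ Prod.snd '' m0) :
    ∀ x, Relation.ReflTransGen (bipStep (m0 ∪ m)) (Sum.inr w0) x →
      (∀ v, x = Sum.inl v → v ∈ B ∧ ∀ w', (v, w') ∈ m0 ∪ m → CwAux E m0 m B w') ∧
      (∀ w, x = Sum.inr w → CwAux E m0 m B w) := by
  have hE : m0 ∪ m ⊆ E := Set.union_subset hm0.1 hm.1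
  intro x hx
  induction hx with
  | refl =>
      refine ⟨by simp, ?_⟩
      rintro w hw
      injection hw with hw
      subst hw
      exact ⟨m0, hm0, Set.subset_union_left, hB, hw0⟩
  | @tail b c hreach hstep ih =>
      cases b with
      | inl v =>
          cases c with
          | inl v' => simp [bipStep] at hstep
          | inr w =>
              refine ⟨by simp, ?_⟩
              rintro w' hw'
              injection hw' with hw'
              subst hw'
              exact (ih.1 v rfl).2 w hstep
      | inr w =>
          cases c with
          | inr w' => simp [bipStep] at hstep
          | inl v =>
              obtain ⟨m0', hM', hsub', hfst', hwfree⟩ : CwAux E m0 m B w := ih.2 w rfl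
              refine ⟨?_, by simp⟩
              rintro v' hv'
              injection hv' with hv'
              subst hv'
              have hstep' : (v, w) ∈ m0 ∪ m := hstep
              have hvB : v ∈ B := by
                rcases hstep' with hvm0 | hvm
                · exact hB ▸ ⟨(v, w), hvm0, rfl⟩
                · by_contra hvB
                  have hkey : ∀ r ∈ m0', r.1 = v ∨ r.2 = w → False := by
                    rintro r hr (h | h)
                    · exact hvB (hfst' ▸ ⟨r, hr, h⟩)
                    · exact hwfree ⟨r, hr, h⟩
                  have hmatch : IsBipMatching E (insert (v, w) m0') := by
                    constructor
                    · rintro p (rfl | hp)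
                      exacts [hm.1 hvm, hM'.1 hp]
                    · rintro p (rfl | hp) q (rfl | hq) hpq
                      · rfl
                      · exact absurd (hpq.imp Eq.symm Eq.symm) (fun h => hkey q hq h)
                      · exact absurd hpq (fun h => hkey p hp h)
                      · exact hM'.2 p hp q hq hpq
                  have hMble : Matchable E (insert v B) :=
                    ⟨insert (v, w) m0', hmatch, by rw [Set.image_insert_eq, hfst']⟩
                  have := hmax _ hMble (Set.subset_insert v B)
                  exact hvB (this ▸ Set.mem_insert v B)
              refine ⟨hvB, ?_⟩
              intro w' hw'
              by_cases hww' : w' = w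
              · exact hww' ▸ ⟨m0', hM', hsub', hfst', hwfree⟩
              · obtain ⟨p, hp, hp1⟩ : ∃ p ∈ m0', p.1 = v := by
                  rw [← hfst'] at hvB
                  obtain ⟨p, hp, hp1⟩ := hvB
                  exact ⟨p, hp, hp1⟩
                have hpv : (v, p.2) ∈ m0' := by rw [← hp1]; exact hp
                have hpw : p.2 ≠ w := fun h => hwfree ⟨p, hp, h⟩
                have hpw' : p.2 = w' := by
                  rcases hsub' hpv with h1 | h1 <;> rcases hw' with h2 | h2
                  · exact congrArg Prod.snd (hm0.2 _ h1 _ h2 (Or.inl rfl))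
                  · rcases hstep' with h3 | h3
                    · exact absurd (congrArg Prod.snd (hm0.2 _ h1 _ h3 (Or.inl rfl))) hpw
                    · exact absurd (congrArg Prod.snd (hm.2 _ h2 _ h3 (Or.inl rfl))) hww'
                  · rcases hstep' with h3 | h3
                    · exact absurd (congrArg Prod.snd (hm0.2 _ h2 _ h3 (Or.inl rfl))) hww'
                    · exact absurd (congrArg Prod.snd (hm.2 _ h1 _ h3 (Or.inl rfl))) hpw
                  · exact congrArg Prod.snd (hm.2 _ h1 _ h2 (Or.inl rfl))
                exact flip_lemma_aux hE hM' hsub' hfst' hwfree (hpw' ▸ hpv) hstep'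

end AuxDeleteUncovered

theorem delete_uncovered_right_vertices {V W : Type*} (E : Set (V × W)) (m0 : Set (V × W))
    (B : Set V) (hm0 : IsBipMatching E m0) (hB : Prod.fst '' m0 = B) (hBm : Matchable E B)
    (hmax : ∀ I, Matchable E I → B ⊆ I → I = B) :
    ∀ I, Matchable E I ↔ Matchable {p ∈ E | p.2 ∈ Prod.snd '' m0} I := by
  intro I
  constructor
  · rintro ⟨m, hmM, hmI⟩
    classical
    set Bad : Set (V ⊕ W) :=
      {x | ∃ w0, w0 ∉ Prod.snd '' m0 ∧ Relation.ReflTransGen (bipStep (m0 ∪ m)) (Sum.inr w0) x}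
      with hBadDef
    have hBadStep : ∀ {x y : V ⊕ W}, x ∈ Bad → bipStep (m0 ∪ m) x y → y ∈ Bad := by
      rintro x y ⟨w0, h1, h2⟩ hs
      exact ⟨w0, h1, h2.tail hs⟩
    have claimB : ∀ v : V, Sum.inl v ∈ Bad → v ∈ B := by
      rintro v ⟨w0, h1, h2⟩
      exact ((key_lemma_aux hm0 hB hmM hmax h1 _ h2).1 v rfl).1
    refine ⟨{p ∈ m | Sum.inl p.1 ∉ Bad} ∪ {p ∈ m0 | Sum.inl p.1 ∈ Bad ∧ p.1 ∈ I}, ⟨?_, ?_⟩, ?_⟩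
    · rintro p (⟨hpm, hpb⟩ | ⟨hpm0, _, _⟩)
      · refine ⟨hmM.1 hpm, ?_⟩
        by_contra h
        refine hpb ⟨p.2, h, Relation.ReflTransGen.single ?_⟩
        show (p.1, p.2) ∈ m0 ∪ m
        rw [Prod.mk.eta]
        exact Or.inr hpm
      · exact ⟨hm0.1 hpm0, ⟨p, hpm0, rfl⟩⟩
    · have hcross : ∀ p ∈ m, Sum.inl p.1 ∉ Bad → ∀ q ∈ m0, Sum.inl q.1 ∈ Bad →
          (p.1 = q.1 ∨ p.2 = q.2) → False := by
        rintro p hp hpb q hq hqb (h | h)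
        · exact hpb (h ▸ hqb)
        · have h1 : Sum.inr q.2 ∈ Bad := by
            refine hBadStep hqb ?_
            show (q.1, q.2) ∈ m0 ∪ m
            rw [Prod.mk.eta]
            exact Or.inl hq
          refine hpb (hBadStep (h ▸ h1) ?_)
          show (p.1, p.2) ∈ m0 ∪ m
          rw [Prod.mk.eta]
          exact Or.inr hp
      rintro p (⟨hpm, hpb⟩ | ⟨hpm0, hpb, _⟩) q (⟨hqm, hqb⟩ | ⟨hqm0, hqb, _⟩) hpq
      · exact hmM.2 p hpm q hqm hpq
      · exact absurd hpq (fun h => hcross p hpm hpb q hqm0 hqb h)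
      · exact absurd hpq (fun h => hcross q hqm hqb p hpm0 hpb (h.imp Eq.symm Eq.symm))
      · exact hm0.2 p hpm0 q hqm0 hpq
    · apply Set.Subset.antisymm
      · rintro _ ⟨p, hp, rfl⟩
        rcases hp with ⟨hpm, _⟩ | ⟨_, _, hpI⟩
        · exact hmI ▸ ⟨p, hpm, rfl⟩
        · exact hpI
      · intro v hv
        by_cases hb : Sum.inl v ∈ Bad
        · have hvB := claimB v hb
          rw [← hB] at hvB
          obtain ⟨q, hq, hq1⟩ := hvB
          exact ⟨q, Or.inr ⟨hq, hq1.symm ▸ hb, hq1.symm ▸ hv⟩, hq1⟩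
        · rw [← hmI] at hv
          obtain ⟨p, hp, hp1⟩ := hv
          exact ⟨p, Or.inl ⟨hp, hp1.symm ▸ hb⟩, hp1⟩
  · rintro ⟨m, ⟨hmE, hmM⟩, hmI⟩
    exact ⟨m, ⟨fun p hp => (hmE hp).1, hmM⟩, hmI⟩
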